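/- Let n ≥ 1 be an integer, n/(n+2) < p < 1, q > n(1−p)/2, D ∈ 𝓜ₙ, u ∈ ℝⁿ, and a = (1−p)/(2p−n(1−p)). Then ∫_{ℝⁿ} f_p(D,u,x)^q dx = (a/π)^{n(q−1)/2} · (Γ(1/(1−p))/Γ(1/(1−p)−n/2))^q · Γ(q/(1−p)−n/2)/Γ(q/(1−p)) · (det D)^{(q−1)/2}. -/

import Mathlib

/-!
Raised to the power `q`, the density is a constant times `(1 + a⟨x - u, D(x - u)⟩)^(-s)` with
`s = q / (1 - p)`. Translating by `u` and substituting `y = Bx`, where `D = BᵀB`, leaves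
`∫ (1 + a‖y‖²)^(-s) dy / √(det D)`. In polar coordinates, after `t = r²`, this is a Beta integral
of the second kind, `∫₀^∞ t^(n/2 - 1) (1 + t)^(-s) dt = Γ(n/2) Γ(s - n/2) / Γ(s)`, which the
substitution `t = x / (1 - x)` turns into the usual Beta integral over `[0, 1]`.
-/

open MeasureTheory Matrix

/-- Normalization constant `A_{n,p}` for `n/(n+2) < p < 1`. -/
noncomputable def gaussA (n : ℕ) (p : ℝ) : ℝ :=
  ((1 - p) / (2 * p - n * (1 - p))) ^ ((n : ℝ) / 2) *
    Real.Gamma (1 / (1 - p)) /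
    (Real.pi ^ ((n : ℝ) / 2) * Real.Gamma (1 / (1 - p) - n / 2))

/-- The `p`-Gaussian density for `n/(n+2) < p < 1`. -/
noncomputable def gaussF (n : ℕ) (p : ℝ) (D : Matrix (Fin n) (Fin n) ℝ)
    (u x : Fin n → ℝ) : ℝ :=
  gaussA n p * Real.sqrt D.det *
    (1 + (1 - p) / (2 * p - n * (1 - p)) * ((x - u) ⬝ᵥ D.mulVec (x - u))) ^ (1 / (p - 1))

open Real Set Module

theorem integral_rpow_mul_one_sub_rpow {a b : ℝ} (ha : 0 < a) (hb : 0 < b) :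
    ∫ x in (0 : ℝ)..1, x ^ (a - 1) * (1 - x) ^ (b - 1) = Gamma a * Gamma b / Gamma (a + b) := by
  have hβ : Complex.betaIntegral a b = ↑(∫ x in (0 : ℝ)..1, x ^ (a - 1) * (1 - x) ^ (b - 1)) := by
    rw [Complex.betaIntegral, ← intervalIntegral.integral_ofReal]
    refine intervalIntegral.integral_congr fun x hx => ?_
    rw [uIcc_of_le zero_le_one] at hx
    push_cast [Complex.ofReal_cpow hx.1, Complex.ofReal_cpow (sub_nonneg.2 hx.2)]
    rfl
  have hΓ := Complex.betaIntegral_eq_Gamma_mul_div a b (by simpa) (by simpa)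
  rw [hβ, ← Complex.ofReal_add, Complex.Gamma_ofReal, Complex.Gamma_ofReal,
    Complex.Gamma_ofReal] at hΓ
  exact_mod_cast hΓ

theorem integral_Ioi_rpow_mul_one_add_rpow_neg {a b : ℝ} (ha : 0 < a) (hb : 0 < b) :
    ∫ t in Ioi (0 : ℝ), t ^ (a - 1) * (1 + t) ^ (-(a + b)) =
      Gamma a * Gamma b / Gamma (a + b) := by
  have himage : (fun x : ℝ => x / (1 - x)) '' Ioo 0 1 = Ioi 0 := by
    refine Subset.antisymm (image_subset_iff.2 fun x hx => div_pos hx.1 (sub_pos.2 hx.2))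
      fun t (ht : 0 < t) => ⟨t / (1 + t), ⟨by positivity, ?_⟩, ?_⟩
    · rw [div_lt_one (by positivity)]; linarith
    · field_simp; ring
  have hderiv : ∀ x ∈ Ioo (0 : ℝ) 1,
      HasDerivWithinAt (fun x : ℝ => x / (1 - x)) ((1 - x)⁻¹ ^ 2) (Ioo 0 1) x := by
    intro x hx
    have h1 : 1 - x ≠ 0 := (sub_pos.2 hx.2).ne'
    convert! ((hasDerivAt_id x).div ((hasDerivAt_id x).const_sub 1) h1).hasDerivWithinAt using 1
    simp only [id]
    field_simp
    ring
  have hinj : InjOn (fun x : ℝ => x / (1 - x)) (Ioo 0 1) := by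
    intro x hx y hy hxy
    have := (sub_pos.2 hx.2).ne'
    have := (sub_pos.2 hy.2).ne'
    field_simp at hxy
    linarith
  have hintegrand : ∀ x ∈ Ioo (0 : ℝ) 1, |(1 - x)⁻¹ ^ 2| •
      ((x / (1 - x)) ^ (a - 1) * (1 + x / (1 - x)) ^ (-(a + b))) =
        x ^ (a - 1) * (1 - x) ^ (b - 1) := by
    rintro x ⟨hx0, hx1⟩
    have h1x : 0 < 1 - x := sub_pos.2 hx1
    have hsum : 1 + x / (1 - x) = (1 - x)⁻¹ := by field_simp; ring
    have hpow : (1 - x) ^ (a + b) = (1 - x) ^ (b - 1) * (1 - x) ^ (a - 1) * (1 - x) ^ 2 := by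
      rw [← rpow_natCast, ← rpow_add h1x, ← rpow_add h1x]
      ring_nf
    rw [hsum, abs_of_nonneg (by positivity), smul_eq_mul, div_rpow hx0.le h1x.le,
      inv_rpow h1x.le, rpow_neg h1x.le, inv_inv, hpow]
    field_simp
  rw [← himage, integral_image_eq_integral_abs_deriv_smul measurableSet_Ioo hderiv hinj,
    setIntegral_congr_fun measurableSet_Ioo hintegrand, ← integral_Ioc_eq_integral_Ioo,
    ← intervalIntegral.integral_of_le zero_le_one,
    integral_rpow_mul_one_sub_rpow ha hb]

theorem integral_Ioi_rpow_mul_one_add_sq_rpow_neg {r s : ℝ} (hr : 0 < r) (hrs : r / 2 < s) :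
    ∫ y in Ioi (0 : ℝ), y ^ (r - 1) * (1 + y ^ 2) ^ (-s) =
      Gamma (r / 2) * Gamma (s - r / 2) / (2 * Gamma s) := by
  have hsq := integral_comp_rpow_Ioi
    (fun t => (2 : ℝ)⁻¹ * (t ^ (r / 2 - 1) * (1 + t) ^ (-(r / 2 + (s - r / 2))))) two_ne_zero
  have hintegrand : ∀ y ∈ Ioi (0 : ℝ), (|(2 : ℝ)| * y ^ ((2 : ℝ) - 1)) •
      ((2 : ℝ)⁻¹ * ((y ^ (2 : ℝ)) ^ (r / 2 - 1) * (1 + y ^ (2 : ℝ)) ^ (-(r / 2 + (s - r / 2))))) =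
        y ^ (r - 1) * (1 + y ^ 2) ^ (-s) := by
    intro y (hy : 0 < y)
    have hpow : y ^ ((2 : ℝ) - 1) * (y ^ (2 : ℝ)) ^ (r / 2 - 1) = y ^ (r - 1) := by
      rw [← rpow_mul hy.le, ← rpow_add hy]
      ring_nf
    rw [rpow_two, ← hpow, add_sub_cancel, abs_two, smul_eq_mul, rpow_two]
    field_simp
  rw [← setIntegral_congr_fun measurableSet_Ioi hintegrand, hsq, integral_const_mul,
    integral_Ioi_rpow_mul_one_add_rpow_neg (by positivity) (by linarith), add_sub_cancel]
  field_simp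

theorem integral_one_add_norm_sq_rpow_neg {E : Type*} [NormedAddCommGroup E]
    [InnerProductSpace ℝ E] [FiniteDimensional ℝ E] [MeasurableSpace E] [BorelSpace E]
    [Nontrivial E] {s : ℝ} (hs : finrank ℝ E / 2 < s) :
    ∫ x : E, (1 + ‖x‖ ^ 2) ^ (-s) =
      π ^ (finrank ℝ E / 2 : ℝ) * Gamma (s - finrank ℝ E / 2) / Gamma s := by
  have hn : (0 : ℝ) < finrank ℝ E := by exact_mod_cast finrank_pos
  have hpow : ∀ y : ℝ, y ^ (finrank ℝ E - 1) = y ^ ((finrank ℝ E : ℝ) - 1) := fun y => by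
    rw [← rpow_natCast, Nat.cast_sub finrank_pos, Nat.cast_one]
  simp only [integral_fun_norm_addHaar volume (fun y => (1 + y ^ 2) ^ (-s)), smul_eq_mul,
    nsmul_eq_mul, hpow, integral_Ioi_rpow_mul_one_add_sq_rpow_neg hn hs, measureReal_def,
    InnerProductSpace.volume_ball, ENNReal.ofReal_one, one_pow, one_mul]
  rw [ENNReal.toReal_ofReal (by positivity), ← rpow_natCast, sqrt_eq_rpow, ← rpow_mul pi_pos.le,
    Gamma_add_one (by positivity)]
  have hΓn := Gamma_pos_of_pos (half_pos hn)
  have hΓs := Gamma_pos_of_pos (hs.trans' (half_pos hn))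
  field_simp

theorem integral_one_add_dotProduct_self_rpow_neg {ι : Type*} [Fintype ι] {s : ℝ}
    (hs : Fintype.card ι / 2 < s) :
    ∫ x : ι → ℝ, (1 + x ⬝ᵥ x) ^ (-s) =
      π ^ (Fintype.card ι / 2 : ℝ) * Gamma (s - Fintype.card ι / 2) / Gamma s := by
  cases isEmpty_or_nonempty ι
  · have := (Gamma_pos_of_pos (by simpa using hs)).ne'
    simp [measureReal_def, volume_pi, this]
  have hnorm : ∀ x : ι → ℝ, x ⬝ᵥ x = ‖WithLp.toLp 2 x‖ ^ 2 := fun x => by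
    rw [EuclideanSpace.norm_sq_eq]
    simp [dotProduct, sq]
  simp only [hnorm]
  rw [(PiLp.volume_preserving_toLp ι).integral_comp
    (MeasurableEquiv.toLp 2 (ι → ℝ)).measurableEmbedding fun x => (1 + ‖x‖ ^ 2) ^ (-s)]
  simpa using integral_one_add_norm_sq_rpow_neg (E := EuclideanSpace ℝ ι) (by simpa using hs)

theorem integral_comp_linearEquiv {E F : Type*} [NormedAddCommGroup E] [NormedSpace ℝ E]
    [MeasurableSpace E] [BorelSpace E] [FiniteDimensional ℝ E] [NormedAddCommGroup F]
    [NormedSpace ℝ F] (μ : Measure E) [μ.IsAddHaarMeasure] (e : E ≃ₗ[ℝ] E) (f : E → F) :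
    ∫ x, f (e x) ∂μ = |LinearMap.det (e : E →ₗ[ℝ] E)|⁻¹ • ∫ x, f x ∂μ := by
  have hdet : LinearMap.det (e : E →ₗ[ℝ] E) ≠ 0 := (LinearEquiv.isUnit_det' e).ne_zero
  have hmap :=
    integral_map_equiv e.toContinuousLinearEquiv.toHomeomorph.toMeasurableEquiv f (μ := μ)
  rw [← abs_inv, ← ENNReal.toReal_ofReal (abs_nonneg _), ← integral_smul_measure,
    ← Measure.map_linearMap_addHaar_eq_smul_addHaar μ hdet]
  exact hmap.symm

open scoped MatrixOrder in
theorem integral_comp_dotProduct_mulVec {ι F : Type*} [Fintype ι] [DecidableEq ι]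
    [NormedAddCommGroup F] [NormedSpace ℝ F] {D : Matrix ι ι ℝ} (hD : D.PosDef) (f : ℝ → F) :
    ∫ x : ι → ℝ, f (x ⬝ᵥ D *ᵥ x) = (√D.det)⁻¹ • ∫ x : ι → ℝ, f (x ⬝ᵥ x) := by
  obtain ⟨B, rfl⟩ := CStarAlgebra.nonneg_iff_eq_star_mul_self.mp hD.posSemidef.nonneg
  have hdet : (star B * B).det = B.det ^ 2 := by
    rw [det_mul, star_eq_conjTranspose, det_conjTranspose, star_trivial, sq]
  have hB : IsUnit B.det := by
    rw [isUnit_iff_ne_zero, ← pow_ne_zero_iff two_ne_zero, ← hdet]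
    exact hD.det_pos.ne'
  have hquad : ∀ x : ι → ℝ, x ⬝ᵥ (star B * B) *ᵥ x = B *ᵥ x ⬝ᵥ B *ᵥ x := fun x => by
    rw [← mulVec_mulVec, dotProduct_mulVec, star_eq_conjTranspose,
      conjTranspose_eq_transpose_of_trivial, vecMul_transpose]
  let e := B.toLinearEquiv' (B.invertibleOfIsUnitDet hB)
  have hdetE : LinearMap.det (e : (ι → ℝ) →ₗ[ℝ] ι → ℝ) = B.det := LinearMap.det_toLin' B
  simp only [hquad, hdet, sqrt_sq_eq_abs, ← hdetE]
  exact integral_comp_linearEquiv volume e fun y => f (y ⬝ᵥ y)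

theorem integral_one_add_mul_dotProduct_mulVec_rpow_neg {ι : Type*} [Fintype ι] [DecidableEq ι]
    {D : Matrix ι ι ℝ} (hD : D.PosDef) {a s : ℝ} (ha : 0 < a) (hs : Fintype.card ι / 2 < s)
    (u : ι → ℝ) :
    ∫ x : ι → ℝ, (1 + a * ((x - u) ⬝ᵥ D *ᵥ (x - u))) ^ (-s) =
      (π / a) ^ (Fintype.card ι / 2 : ℝ) * Gamma (s - Fintype.card ι / 2) / Gamma s / √D.det := by
  have hscale : ∀ x : ι → ℝ, a * (x ⬝ᵥ D *ᵥ x) = x ⬝ᵥ (a • D) *ᵥ x := fun x => by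
    rw [smul_mulVec, dotProduct_smul, smul_eq_mul]
  have hdet : √(a • D).det = a ^ (Fintype.card ι / 2 : ℝ) * √D.det := by
    rw [det_smul, sqrt_mul (by positivity), sqrt_eq_rpow, ← rpow_natCast, ← rpow_mul ha.le]
    ring_nf
  rw [integral_sub_right_eq_self (fun x => (1 + a * (x ⬝ᵥ D *ᵥ x)) ^ (-s)) u]
  simp only [hscale]
  rw [integral_comp_dotProduct_mulVec (hD.smul ha) (fun t => (1 + t) ^ (-s)),
    integral_one_add_dotProduct_self_rpow_neg hs, hdet, div_rpow pi_pos.le ha.le, smul_eq_mul]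
  field_simp

theorem two_mul_sub_mul_one_sub_pos {n : ℕ} {p : ℝ} (hp : (n : ℝ) / (n + 2) < p) :
    0 < 2 * p - n * (1 - p) := by
  rw [div_lt_iff₀ (by positivity)] at hp
  linarith

theorem natCast_div_two_lt_div_one_sub {n : ℕ} {p q : ℝ} (hp : p < 1)
    (hq : (n : ℝ) * (1 - p) / 2 < q) : (n : ℝ) / 2 < q / (1 - p) := by
  rwa [lt_div_iff₀ (sub_pos.2 hp), div_mul_eq_mul_div]

theorem gaussF_rpow_eq {n : ℕ} {p : ℝ} {D : Matrix (Fin n) (Fin n) ℝ} (hD : D.PosSemidef)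
    (ha : 0 ≤ (1 - p) / (2 * p - n * (1 - p))) (hA : 0 ≤ gaussA n p) (u x : Fin n → ℝ) (q : ℝ) :
    gaussF n p D u x ^ q = (gaussA n p * √D.det) ^ q *
      (1 + (1 - p) / (2 * p - n * (1 - p)) * ((x - u) ⬝ᵥ D *ᵥ (x - u))) ^ (-(q / (1 - p))) := by
  have hbase : 0 ≤ 1 + (1 - p) / (2 * p - n * (1 - p)) * ((x - u) ⬝ᵥ D *ᵥ (x - u)) := by
    have := hD.dotProduct_mulVec_nonneg (x - u)
    positivity
  rw [gaussF, mul_rpow (by positivity) (rpow_nonneg hbase _), ← rpow_mul hbase,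
    show p - 1 = -(1 - p) by ring, div_neg, neg_mul, one_div_mul_eq_div]

theorem integral_gaussF_rpow_general (n : ℕ) (p q : ℝ)
    (hp₁ : (n : ℝ) / (n + 2) < p) (hp₂ : p < 1) (hq : (n : ℝ) * (1 - p) / 2 < q)
    (D : Matrix (Fin n) (Fin n) ℝ) (hD : D.PosDef) (u : Fin n → ℝ) :
    ∫ x : Fin n → ℝ, gaussF n p D u x ^ q =
      ((1 - p) / (2 * p - n * (1 - p)) / Real.pi) ^ ((n : ℝ) * (q - 1) / 2) *
        (Real.Gamma (1 / (1 - p)) / Real.Gamma (1 / (1 - p) - n / 2)) ^ q *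
        (Real.Gamma (q / (1 - p) - n / 2) / Real.Gamma (q / (1 - p))) *
        D.det ^ ((q - 1) / 2) := by
  have hden := two_mul_sub_mul_one_sub_pos hp₁
  have ha : 0 < (1 - p) / (2 * p - n * (1 - p)) := div_pos (sub_pos.2 hp₂) hden
  have hs := natCast_div_two_lt_div_one_sub hp₂ hq
  have hs₁ := natCast_div_two_lt_div_one_sub (n := n) (q := 1) hp₂ (by linarith)
  have hΓ₁ : 0 < Gamma (1 / (1 - p)) := Gamma_pos_of_pos (hs₁.trans_le' (by positivity))
  have hΓ₂ : 0 < Gamma (1 / (1 - p) - n / 2) := Gamma_pos_of_pos (sub_pos.2 hs₁)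
  have hΓ₃ : 0 < Gamma (q / (1 - p) - n / 2) := Gamma_pos_of_pos (sub_pos.2 hs)
  have hΓ₄ : 0 < Gamma (q / (1 - p)) := Gamma_pos_of_pos (hs.trans_le' (by positivity))
  have hA : 0 ≤ gaussA n p := by unfold gaussA; positivity
  have hdet := hD.det_pos
  simp only [gaussF_rpow_eq hD.posSemidef ha.le hA u]
  rw [integral_const_mul, integral_one_add_mul_dotProduct_mulVec_rpow_neg hD ha
    (by simpa using hs), gaussA, Fintype.card_fin]
  refine log_injOn_pos (mem_Ioi.2 (by positivity)) (mem_Ioi.2 (by positivity)) ?_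
  simp (disch := positivity) only [log_mul, log_div, log_rpow, log_sqrt]
  ring

/-- the integral of `f_p(D,u,·)^q` for `n/(n+2) < p < 1`, `q > n(1−p)/2`,
with `a = (1−p)/(2p−n(1−p))`. -/
theorem integral_gaussF_rpow (n : ℕ) (hn : 1 ≤ n) (p q : ℝ)
    (hp₁ : (n : ℝ) / (n + 2) < p) (hp₂ : p < 1) (hq : (n : ℝ) * (1 - p) / 2 < q)
    (D : Matrix (Fin n) (Fin n) ℝ) (hD : D.PosDef) (u : Fin n → ℝ) :
    ∫ x : Fin n → ℝ, gaussF n p D u x ^ q =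
      ((1 - p) / (2 * p - n * (1 - p)) / Real.pi) ^ ((n : ℝ) * (q - 1) / 2) *
        (Real.Gamma (1 / (1 - p)) / Real.Gamma (1 / (1 - p) - n / 2)) ^ q *
        (Real.Gamma (q / (1 - p) - n / 2) / Real.Gamma (q / (1 - p))) *
        D.det ^ ((q - 1) / 2) :=
  integral_gaussF_rpow_general n p q hp₁ hp₂ hq D hD u
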